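/- arXiv:2404.07801 — 6 statements merged into one kernel-verified Lean document; each statement's English description precedes it below -/
import Mathlib

section
/- Let A_1, …, A_k be n × n matrices over a field K whose linear span contains an invertible matrix A. Then there exist diagonal matrices D_1, …, D_k and nonsingular matrices P, Q ∈ M_n(K) with A_i = P D_i Q for all i if and only if the k matrices A^{-1} A_i (i = 1, …, k) pairwise commute and are each diagonalizable over K. -/
open Matrix BigOperators

variable {K : Type*} [Field K]

/-- `T` equals the sum of `r` rank-one tensors with components `u i`, `v i`, `w i`. -/
def tensorDecomp {α β γ : Type*} [Fintype α] [Fintype β] [Fintype γ]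
    (T : α → β → γ → K) (r : ℕ)
    (u : Fin r → α → K) (v : Fin r → β → K) (w : Fin r → γ → K) : Prop :=
  ∀ i j k, T i j k = ∑ l, u l i * v l j * w l k

/-- The rank of a tensor: least number of rank-one summands. -/
noncomputable def tensorRank {α β γ : Type*} [Fintype α] [Fintype β] [Fintype γ]
    (T : α → β → γ → K) : ℕ :=
  sInf {r | ∃ u v w, tensorDecomp T r u v w}

/-- The `k`-th z-zSlice of a tensor. -/
def zSlice {α β : Type*} {p : ℕ} (T : α → β → Fin p → K) (k : Fin p) : Matrix α β K :=
  Matrix.of fun i j => T i j k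

/-- A matrix is diagonalizable if it is similar over `K` to a diagonal matrix. -/
def Diagonalizable {ι : Type*} [Fintype ι] [DecidableEq ι] (M : Matrix ι ι K) : Prop :=
  ∃ P : Matrix ι ι K, IsUnit P ∧ ∃ d : ι → K, M = P * Matrix.diagonal d * P⁻¹

/-! If `A i = P * diagonal (D i) * Q`, every matrix in the span of the `A i` has the form
`P * diagonal d * Q`, so `M⁻¹ * A i = Q⁻¹ * diagonal (d⁻¹ * D i) * Q` and the `M⁻¹ * A i` are
diagonalized simultaneously by `Q⁻¹`. Conversely, commuting diagonalizable matrices `M⁻¹ * A i` have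
a common eigenbasis (simultaneous triangularization, where for diagonalizable maps the generalized
eigenspaces are eigenspaces); if `S` has this basis as columns, then
`A i = (M * S) * diagonal (d i) * S⁻¹`. -/

open Module Module.End Submodule

lemma Module.End.exists_basis_of_iSup_iInf_eigenspace_eq_top {ι κ V : Type*}
    [AddCommGroup V] [Module K V] [FiniteDimensional K V] {f : κ → End K V}
    (h : ⨆ χ : κ → K, ⨅ i, (f i).eigenspace (χ i) = ⊤) (b₀ : Basis ι K V) :
    ∃ (b : Basis ι K V) (χ : ι → κ → K), ∀ j i, f i (b j) = χ j i • b j := by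
  rw [iSup_eq_span] at h
  let b' := Basis.ofSpan h.ge
  have := FiniteDimensional.fintypeBasisIndex b'
  let b := b'.reindex (b'.indexEquiv b₀)
  have hmem : ∀ j, ∃ χ : κ → K, ∀ i, f i (b j) = χ i • b j := by
    intro j
    obtain ⟨-, ⟨χ, rfl⟩, hχ⟩ := Basis.ofSpan_subset h.ge ⟨_, (b'.reindex_apply _ j).symm⟩
    exact ⟨χ, fun i => mem_eigenspace_iff.mp ((mem_iInf _).mp hχ i)⟩
  choose χ hχ using hmem
  exact ⟨b, χ, hχ⟩

lemma Module.Basis.isUnit_toMatrix {R M ι : Type*} [CommRing R] [AddCommGroup M] [Module R M]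
    [Fintype ι] [DecidableEq ι] (b b' : Basis ι R M) : IsUnit (b.toMatrix b') :=
  letI := b.invertibleToMatrix b'
  isUnit_of_invertible _

section
variable {ι κ : Type*} [Fintype ι] [DecidableEq ι]

lemma Matrix.toLin'_eq_toLin_iff (b : Basis ι K (ι → K)) (N D : Matrix ι ι K) :
    toLin' N = toLin b b D ↔
      N = (Pi.basisFun K ι).toMatrix b * D * ((Pi.basisFun K ι).toMatrix b)⁻¹ := by
  set S := (Pi.basisFun K ι).toMatrix b with hS_def
  have hS : IsUnit S.det := (isUnit_iff_isUnit_det S).mp ((Pi.basisFun K ι).isUnit_toMatrix b)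
  have hSinv : S⁻¹ = b.toMatrix (Pi.basisFun K ι) :=
    inv_eq_right_inv ((Pi.basisFun K ι).toMatrix_mul_toMatrix_flip b)
  rw [← (LinearMap.toMatrix b b).injective.eq_iff, LinearMap.toMatrix_toLin,
    ← basis_toMatrix_mul_linearMap_toMatrix_mul_basis_toMatrix b (Pi.basisFun K ι) b
      (Pi.basisFun K ι),
    LinearMap.toMatrix_eq_toMatrix', LinearMap.toMatrix'_toLin', ← hSinv, ← hS_def]
  constructor
  · rintro rfl
    simp only [Matrix.mul_assoc, mul_nonsing_inv_cancel_left S _ hS, mul_nonsing_inv _ hS,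
      Matrix.mul_one]
  · rintro rfl
    simp only [Matrix.mul_assoc, nonsing_inv_mul_cancel_left S _ hS, nonsing_inv_mul _ hS,
      Matrix.mul_one]

lemma Diagonalizable.exists_basis {N : Matrix ι ι K} (h : Diagonalizable N) :
    ∃ (b : Basis ι K (ι → K)) (d : ι → K), toLin' N = toLin b b (diagonal d) := by
  obtain ⟨P, hP, d, rfl⟩ := h
  let b := (Pi.basisFun K ι).map (P.toLinearEquiv' hP.invertible)
  have hb : (Pi.basisFun K ι).toMatrix b = P := by
    ext i j
    rw [Basis.toMatrix_apply, Pi.basisFun_repr, Basis.map_apply, Pi.basisFun_apply]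
    change toLin' P (Pi.single j 1) i = P i j
    simp
  exact ⟨b, d, (toLin'_eq_toLin_iff b _ _).mpr (by rw [hb])⟩

lemma Diagonalizable.iSup_eigenspace_eq_top {N : Matrix ι ι K} (h : Diagonalizable N) :
    ⨆ μ, eigenspace (toLin' N) μ = ⊤ := by
  obtain ⟨b, d, hN⟩ := h.exists_basis
  rw [hN]
  exact iSup_eigenspace_toLin_diagonal_eq_top d b

lemma Diagonalizable.maxGenEigenspace_eq_eigenspace {N : Matrix ι ι K} (h : Diagonalizable N)
    (μ : K) : maxGenEigenspace (toLin' N) μ = eigenspace (toLin' N) μ := by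
  obtain ⟨b, d, hN⟩ := h.exists_basis
  rw [hN]
  exact maxGenEigenspace_toLin_diagonal_eq_eigenspace d b

theorem Diagonalizable.exists_simultaneous_of_commute {N : κ → Matrix ι ι K}
    (hcomm : ∀ i j, Commute (N i) (N j)) (hN : ∀ i, Diagonalizable (N i)) :
    ∃ S : Matrix ι ι K, IsUnit S ∧ ∃ d : κ → ι → K, ∀ i, N i = S * diagonal (d i) * S⁻¹ := by
  have hmax i := (hN i).maxGenEigenspace_eq_eigenspace
  have htop : ⨆ χ : κ → K, ⨅ i, maxGenEigenspace (toLin' (N i)) (χ i) = ⊤ :=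
    iSup_iInf_maxGenEigenspace_eq_top_of_iSup_maxGenEigenspace_eq_top_of_commute _ (fun i j _ => (hcomm i j).map toLinAlgEquiv')
    (fun i => by simpa only [hmax i] using (hN i).iSup_eigenspace_eq_top)
  simp only [hmax] at htop
  obtain ⟨b, χ, hχ⟩ := exists_basis_of_iSup_iInf_eigenspace_eq_top htop (Pi.basisFun K ι)
  refine ⟨_, (Pi.basisFun K ι).isUnit_toMatrix b, fun i j => χ j i, fun i => ?_⟩
  refine (toLin'_eq_toLin_iff b (N i) (diagonal fun j => χ j i)).mp (b.ext fun j => ?_)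
  rw [hχ, (hasEigenvector_toLin_diagonal _ j b).apply_eq_smul]

lemma commute_mul_diagonal_mul_inv {S : Matrix ι ι K} (hS : IsUnit S) (a b : ι → K) :
    Commute (S * diagonal a * S⁻¹) (S * diagonal b * S⁻¹) := by
  have hSdet : IsUnit S.det := (isUnit_iff_isUnit_det S).mp hS
  have hmul : ∀ a b : ι → K,
      S * diagonal a * S⁻¹ * (S * diagonal b * S⁻¹) = S * diagonal (fun j => a j * b j) * S⁻¹ := by
    intro a b
    rw [← diagonal_mul_diagonal]
    simp only [Matrix.mul_assoc, nonsing_inv_mul_cancel_left S _ hSdet]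
  simp only [commute_iff_eq, hmul, mul_comm]

theorem exists_simultaneous_diagonal_iff {N : κ → Matrix ι ι K} :
    (∃ S : Matrix ι ι K, IsUnit S ∧ ∃ d : κ → ι → K, ∀ i, N i = S * diagonal (d i) * S⁻¹) ↔
      (∀ i j, Commute (N i) (N j)) ∧ ∀ i, Diagonalizable (N i) := by
  refine ⟨?_, fun h => Diagonalizable.exists_simultaneous_of_commute h.1 h.2⟩
  rintro ⟨S, hS, d, hN⟩
  exact ⟨fun i j => hN i ▸ hN j ▸ commute_mul_diagonal_mul_inv hS (d i) (d j),
    fun i => ⟨S, hS, d i, hN i⟩⟩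

lemma exists_eq_mul_diagonal_mul_of_mem_span {A : κ → Matrix ι ι K}
    {P Q M : Matrix ι ι K} {D : κ → ι → K} (hA : ∀ i, A i = P * diagonal (D i) * Q)
    (hM : M ∈ span K (Set.range A)) : ∃ d, M = P * diagonal d * Q := by
  let L := LinearMap.mulLeft K P ∘ₗ LinearMap.mulRight K Q ∘ₗ diagonalLinearMap ι K K
  have hL : ∀ d, L d = P * diagonal d * Q := fun d => (Matrix.mul_assoc _ _ _).symm
  have hspan : span K (Set.range A) ≤ LinearMap.range L :=
    span_le.mpr (Set.range_subset_iff.mpr fun i => ⟨D i, (hL _).trans (hA i).symm⟩)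
  obtain ⟨d, hd⟩ := hspan hM
  exact ⟨d, hd ▸ hL d⟩

lemma exists_inv_mul_eq_conj_diagonal {A : κ → Matrix ι ι K}
    {P Q M : Matrix ι ι K} {D : κ → ι → K} (hP : IsUnit P) (hQ : IsUnit Q)
    (hA : ∀ i, A i = P * diagonal (D i) * Q) (hM : M ∈ span K (Set.range A)) :
    ∃ e : κ → ι → K, ∀ i, M⁻¹ * A i = Q⁻¹ * diagonal (e i) * Q⁻¹⁻¹ := by
  obtain ⟨d, rfl⟩ := exists_eq_mul_diagonal_mul_of_mem_span hA hM
  have hPdet : IsUnit P.det := (isUnit_iff_isUnit_det P).mp hP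
  have hQdet : IsUnit Q.det := (isUnit_iff_isUnit_det Q).mp hQ
  refine ⟨fun i j => Ring.inverse d j * D i j, fun i => ?_⟩
  rw [hA i, nonsing_inv_nonsing_inv Q hQdet, Matrix.mul_inv_rev, Matrix.mul_inv_rev, inv_diagonal,
    ← diagonal_mul_diagonal]
  simp only [Matrix.mul_assoc, nonsing_inv_mul_cancel_left P _ hPdet]

end

theorem simultaneous_diagonalization_by_equivalence
    {n k : ℕ} (A : Fin k → Matrix (Fin n) (Fin n) K)
    (M : Matrix (Fin n) (Fin n) K)
    (hM : M ∈ Submodule.span K (Set.range A)) (hMinv : IsUnit M) :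
    (∃ (D : Fin k → Fin n → K) (P Q : Matrix (Fin n) (Fin n) K),
        IsUnit P ∧ IsUnit Q ∧ ∀ i, A i = P * Matrix.diagonal (D i) * Q) ↔
    ((∀ i j, Commute (M⁻¹ * A i) (M⁻¹ * A j)) ∧
      ∀ i, Diagonalizable (M⁻¹ * A i)) := by
  rw [← exists_simultaneous_diagonal_iff]
  constructor
  · rintro ⟨D, P, Q, hP, hQ, hA⟩
    obtain ⟨e, he⟩ := exists_inv_mul_eq_conj_diagonal hP hQ hA hM
    exact ⟨Q⁻¹, isUnit_nonsing_inv_iff.mpr hQ, e, he⟩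
  · rintro ⟨S, hS, d, hd⟩
    have hMdet : IsUnit M.det := (isUnit_iff_isUnit_det M).mp hMinv
    refine ⟨d, M * S, S⁻¹, hMinv.mul hS, isUnit_nonsing_inv_iff.mpr hS, fun i => ?_⟩
    calc A i = M * (M⁻¹ * A i) := (mul_nonsing_inv_cancel_left M _ hMdet).symm
      _ = M * S * diagonal (d i) * S⁻¹ := by simp only [hd i, Matrix.mul_assoc]
end

section
/- Let S be a tensor of format r × r × p over a field K whose slices Z_1, …, Z_p span a space containing an invertible matrix Z. Then the following are equivalent: (i) there exist vectors w_1, …, w_r ∈ K^p and two linearly independent families (u_1, …, u_r), (v_1, …, v_r) of vectors in K^r such that S = Σ_{i=1}^r u_i ⊗ v_i ⊗ w_i; (ii) the p matrices Z^{-1} Z_i pairwise commute and are diagonalizable over K. -/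
open Matrix BigOperators

variable {K : Type*} [Field K]

/-! If `S = ∑ uₗ ⊗ vₗ ⊗ wₗ` with independent `uₗ` and `vₗ`, let `A` be the matrix with columns `uₗ`
and `B` the matrix with rows `vₗ`. Every slice is `A Dₖ B` with `Dₖ` diagonal, and so is every
matrix of their span, `Z = A D B` in particular; hence `Z⁻¹ Zₖ = B⁻¹ (D⁻¹ Dₖ) B` are all
diagonalized by the same `B`. Conversely, a diagonalizable matrix is semisimple, so for a commuting
family of them the joint eigenspaces span the whole space and yield a common eigenbasis. Then
`Z⁻¹ Zₖ = P Dₖ P⁻¹` for a single invertible `P`, and `Zₖ = (Z P) Dₖ P⁻¹` is the decomposition,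
with `u` the columns of `Z P` and `v` the rows of `P⁻¹`. -/

open Module

namespace Matrix

lemma mul_diagonal_mul_apply {m n o : Type*} [Fintype n] [DecidableEq n] (A : Matrix m n K)
    (d : n → K) (B : Matrix n o K) (i : m) (j : o) :
    (A * diagonal d * B) i j = ∑ l, A i l * d l * B l j := by
  rw [mul_apply]
  simp only [mul_diagonal]

lemma exists_eq_mul_diagonal_mul_of_mem_span {m n o κ : Type*} [Fintype n] [DecidableEq n]
    (A : Matrix m n K) (B : Matrix n o K) (d : κ → n → K) {Z : Matrix m o K}
    (hZ : Z ∈ Submodule.span K (Set.range fun k => A * diagonal (d k) * B)) :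
    ∃ e : n → K, Z = A * diagonal e * B := by
  let L : (n → K) →ₗ[K] Matrix m o K :=
    { toFun e := A * diagonal e * B
      map_add' := fun _ _ => by
        simp only [← Matrix.mul_add, ← Matrix.add_mul, diagonal_add]; rfl
      map_smul' := fun _ _ => by rw [diagonal_smul, Matrix.mul_smul, Matrix.smul_mul]; rfl }
  have hZL : Z ∈ LinearMap.range L :=
    Submodule.span_le.mpr (Set.range_subset_iff.mpr fun k => LinearMap.mem_range_self L (d k)) hZ
  obtain ⟨e, he⟩ := LinearMap.mem_range.mp hZL
  exact ⟨e, he.symm⟩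

variable {ι : Type*} [Fintype ι] [DecidableEq ι]

lemma inv_mul_conj_diagonal {A B : Matrix ι ι K} (hA : IsUnit A) (e d : ι → K) :
    (A * diagonal e * B)⁻¹ * (A * diagonal d * B) = B⁻¹ * diagonal (Ring.inverse e * d) * B := by
  simp only [mul_inv_rev, inv_diagonal, Matrix.mul_assoc,
    nonsing_inv_mul_cancel_left _ _ ((isUnit_iff_isUnit_det A).mp hA)]
  rw [← Matrix.mul_assoc (diagonal _), diagonal_mul_diagonal']
  rfl

lemma commute_conj_diagonal {B : Matrix ι ι K} (hB : IsUnit B) (a b : ι → K) :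
    Commute (B⁻¹ * diagonal a * B) (B⁻¹ * diagonal b * B) := by
  have hBdet := (isUnit_iff_isUnit_det B).mp hB
  simp only [Commute, SemiconjBy, Matrix.mul_assoc, mul_nonsing_inv_cancel_left _ _ hBdet]
  simp only [← Matrix.mul_assoc, diagonal_mul_diagonal, mul_comm (a _)]

lemma diagonalizable_conj_diagonal {B : Matrix ι ι K} (hB : IsUnit B) (a : ι → K) :
    Diagonalizable (B⁻¹ * diagonal a * B) :=
  ⟨B⁻¹, isUnit_nonsing_inv_iff.mpr hB, a,
    by rw [nonsing_inv_nonsing_inv _ ((isUnit_iff_isUnit_det B).mp hB)]⟩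

end Matrix

lemma tensorDecomp_iff_zSlice_eq {α β : Type*} [Fintype α] [Fintype β] {r p : ℕ}
    {T : α → β → Fin p → K} {u : Fin r → α → K} {v : Fin r → β → K} {w : Fin r → Fin p → K} :
    tensorDecomp T r u v w ↔ ∀ k, zSlice T k = (of u)ᵀ * diagonal (fun l => w l k) * of v := by
  simp only [tensorDecomp, ← ext_iff, mul_diagonal_mul_apply, zSlice, of_apply, transpose_apply,
    mul_right_comm (u _ _) (w _ _)]
  exact ⟨fun h k i j => h i j k, fun h i j k => h k i j⟩

namespace Module.End

open Polynomial

variable {V ι : Type*} [AddCommGroup V] [Module K V]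

lemma isSemisimple_of_basis_eigenvectors [Fintype ι] {f : End K V} (b : Basis ι K V)
    {d : ι → K} (hb : ∀ i, f (b i) = d i • b i) : f.IsSemisimple := by
  classical
  -- `∏ (X - μ)` over the eigenvalues is squarefree and kills every basis vector
  set q : K[X] := ∏ μ ∈ Finset.univ.image d, (X - C μ)
  have hq : Squarefree q := (separable_prod_X_sub_C_iff'.mpr fun _ _ _ _ h => h).squarefree
  refine isSemisimple_of_squarefree_aeval_eq_zero hq (b.ext fun i => ?_)
  have hev : f.HasEigenvector (d i) (b i) := ⟨mem_eigenspace_iff.mpr (hb i), b.ne_zero i⟩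
  rw [aeval_apply_of_hasEigenvector hev, eval_prod,
    Finset.prod_eq_zero (Finset.mem_image_of_mem d (Finset.mem_univ i)) (by simp),
    zero_smul, LinearMap.zero_apply]

lemma iSup_eigenspace_eq_top_of_basis_eigenvectors {f : End K V} (b : Basis ι K V)
    {d : ι → K} (hb : ∀ i, f (b i) = d i • b i) : ⨆ μ, f.eigenspace μ = ⊤ :=
  (Submodule.eq_top_iff_forall_basis_mem b).mpr fun i =>
    Submodule.mem_iSup_of_mem (d i) (mem_eigenspace_iff.mpr (hb i))

lemma iSup_iInf_eigenspace_eq_top_of_commute [FiniteDimensional K V] {κ : Type*}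
    (f : κ → End K V) (hcomm : Pairwise fun k l => Commute (f k) (f l))
    (hss : ∀ k, (f k).IsSemisimple) (htop : ∀ k, ⨆ μ, (f k).eigenspace μ = ⊤) :
    ⨆ χ : κ → K, ⨅ k, (f k).eigenspace (χ k) = ⊤ := by
  simp_rw [← (hss _).isFinitelySemisimple.maxGenEigenspace_eq_eigenspace] at htop ⊢
  exact iSup_iInf_maxGenEigenspace_eq_top_of_iSup_maxGenEigenspace_eq_top_of_commute f hcomm htop

end Module.End

lemma Module.Basis.exists_basis_forall_mem_of_iSup_eq_top {V ι σ : Type*} [AddCommGroup V]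
    [Module K V] (b₀ : Basis ι K V) {N : σ → Submodule K V} (hN : ⨆ s, N s = ⊤) :
    ∃ b : Basis ι K V, ∀ i, ∃ s, b i ∈ N s := by
  have hspan : ⊤ ≤ Submodule.span K (⋃ s, (N s : Set V)) := by
    rw [← Submodule.iSup_eq_span, hN]
  let b := Basis.ofSpan hspan
  refine ⟨b.reindex (b.indexEquiv b₀), fun i => Set.mem_iUnion.mp ?_⟩
  rw [Basis.reindex_apply]
  exact Basis.ofSpan_subset hspan (Set.mem_range_self _)

namespace Matrix

variable {ι : Type*} [Fintype ι] [DecidableEq ι]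

lemma eq_conj_diagonal_iff_mulVec_col {M P : Matrix ι ι K} (hP : IsUnit P) {d : ι → K} :
    M = P * diagonal d * P⁻¹ ↔ ∀ i, M *ᵥ P.col i = d i • P.col i := by
  have hPdet := (isUnit_iff_isUnit_det P).mp hP
  calc M = P * diagonal d * P⁻¹ ↔ M * P = P * diagonal d := by
        constructor
        · rintro rfl; rw [nonsing_inv_mul_cancel_right _ _ hPdet]
        · intro h; rw [← h, mul_nonsing_inv_cancel_right _ _ hPdet]
    _ ↔ ∀ i, M *ᵥ P.col i = d i • P.col i := by
        simp only [← ext_iff, mul_diagonal]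
        simp only [mul_apply, funext_iff, mulVec, dotProduct, Pi.smul_apply, smul_eq_mul,
          col_apply, mul_comm (d _)]
        exact forall_comm

lemma diagonalizable_iff_exists_basis {M : Matrix ι ι K} :
    Diagonalizable M ↔ ∃ (b : Basis ι K (ι → K)) (d : ι → K), ∀ i, M *ᵥ b i = d i • b i := by
  constructor
  · rintro ⟨P, hP, d, hM⟩
    refine ⟨basisOfLinearIndependentOfCardEqFinrank' _ (linearIndependent_cols_iff_isUnit.mpr hP)
      (by simp), d, ?_⟩
    simpa using (eq_conj_diagonal_iff_mulVec_col hP).mp hM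
  · rintro ⟨b, d, hb⟩
    have hP : IsUnit (of ⇑b)ᵀ := linearIndependent_cols_iff_isUnit.mp b.linearIndependent
    exact ⟨_, hP, d, (eq_conj_diagonal_iff_mulVec_col hP).mpr hb⟩

theorem exists_conj_diagonal_of_commute {κ : Type*} (M : κ → Matrix ι ι K)
    (hcomm : Pairwise fun k l => Commute (M k) (M l)) (hdiag : ∀ k, Diagonalizable (M k)) :
    ∃ P : Matrix ι ι K, IsUnit P ∧ ∃ d : κ → ι → K, ∀ k, M k = P * diagonal (d k) * P⁻¹ := by
  choose b d hb using fun k => diagonalizable_iff_exists_basis.mp (hdiag k)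
  have htop := Module.End.iSup_iInf_eigenspace_eq_top_of_commute (fun k => toLin' (M k))
    (fun k l hkl => (hcomm hkl).map toLinAlgEquiv')
    (fun k => Module.End.isSemisimple_of_basis_eigenvectors (b k) (hb k))
    (fun k => Module.End.iSup_eigenspace_eq_top_of_basis_eigenvectors (b k) (hb k))
  obtain ⟨c, hc⟩ := (Pi.basisFun K ι).exists_basis_forall_mem_of_iSup_eq_top htop
  choose χ hχ using hc
  have hP : IsUnit (of ⇑c)ᵀ := linearIndependent_cols_iff_isUnit.mp c.linearIndependent
  refine ⟨_, hP, fun k i => χ i k, fun k => (eq_conj_diagonal_iff_mulVec_col hP).mpr fun i => ?_⟩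
  exact Module.End.mem_eigenspace_iff.mp ((Submodule.mem_iInf _).mp (hχ i) k)

end Matrix

theorem rank_r_decomposition_iff_commuting_diagonalizable
    {r p : ℕ} (S : Fin r → Fin r → Fin p → K)
    (Z : Matrix (Fin r) (Fin r) K)
    (hZ : Z ∈ Submodule.span K (Set.range fun k => zSlice S k))
    (hZinv : IsUnit Z) :
    (∃ (w : Fin r → Fin p → K) (u v : Fin r → Fin r → K),
        LinearIndependent K u ∧ LinearIndependent K v ∧ tensorDecomp S r u v w) ↔
    ((∀ k l, Commute (Z⁻¹ * zSlice S k) (Z⁻¹ * zSlice S l)) ∧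
      ∀ k, Diagonalizable (Z⁻¹ * zSlice S k)) := by
  constructor
  · rintro ⟨w, u, v, hu, hv, hdec⟩
    have hA : IsUnit (of u)ᵀ := linearIndependent_cols_iff_isUnit.mp hu
    have hB : IsUnit (of v) := linearIndependent_rows_iff_isUnit.mp hv
    simp_rw [tensorDecomp_iff_zSlice_eq.mp hdec] at hZ ⊢
    obtain ⟨e, rfl⟩ := exists_eq_mul_diagonal_mul_of_mem_span _ _ _ hZ
    simp_rw [inv_mul_conj_diagonal hA]
    exact ⟨fun k l => commute_conj_diagonal hB _ _, fun k => diagonalizable_conj_diagonal hB _⟩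
  · rintro ⟨hcomm, hdiag⟩
    obtain ⟨P, hP, d, hd⟩ := exists_conj_diagonal_of_commute _ (fun k l _ => hcomm k l) hdiag
    refine ⟨fun l k => d k l, (Z * P)ᵀ, (P⁻¹ : Matrix (Fin r) (Fin r) K),
      linearIndependent_cols_iff_isUnit.mpr (hZinv.mul hP),
      linearIndependent_rows_iff_isUnit.mpr (isUnit_nonsing_inv_iff.mpr hP),
      tensorDecomp_iff_zSlice_eq.mpr fun k => ?_⟩
    rw [← mul_nonsing_inv_cancel_left Z (zSlice S k) ((isUnit_iff_isUnit_det Z).mp hZinv), hd k]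
    show _ = Z * P * diagonal (d k) * P⁻¹
    simp only [Matrix.mul_assoc]
end

section
/- Let T be a tensor of format n × n × p over a field K, and suppose A ∈ span(T_1, …, T_p) is an invertible matrix such that the p-tuple (A^{-1}T_1, …, A^{-1}T_p) admits a commuting extension (Z_1, …, Z_p) of size r ≥ n in which every Z_i is diagonalizable over K. Then rank(T) ≤ r. -/
open Matrix BigOperators

variable {K : Type*} [Field K]

/-!
Commuting diagonalizable matrices are simultaneously diagonalizable, say `Z k = P * D k * P⁻¹`
with `D k` diagonal. Taking top-left blocks, `A⁻¹ * T_k` equals `P' * D k * P''`, where `P'` is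
the first `n` rows of `P` and `P''` the first `n` columns of `P⁻¹`. Hence every slice `T_k` is
a combination of the same `r` rank-one matrices, `(A * P')` column `l` times row `l` of `P''`,
with coefficient `D k l`. This is a decomposition of `T` into `r` rank-one tensors.
-/

open Module End

namespace Module.End

variable {V κ : Type*} [AddCommGroup V] [Module K V]

theorem maxGenEigenspace_eq_eigenspace_of_iSup_eigenspace_eq_top {f : End K V}
    (h : ⨆ μ, f.eigenspace μ = ⊤) (μ : K) : f.maxGenEigenspace μ = f.eigenspace μ := by
  set Y := ⨆ (ν) (_ : ν ≠ μ), f.maxGenEigenspace ν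
  have hdisj : Disjoint (f.maxGenEigenspace μ) Y :=
    iSupIndep_def.mp f.independent_maxGenEigenspace μ
  have htop : f.eigenspace μ ⊔ Y = ⊤ := by
    refine eq_top_iff.mpr (h ▸ iSup_le fun ν => ?_)
    rcases eq_or_ne ν μ with rfl | hν
    · exact le_sup_left
    · exact le_sup_of_le_right (le_iSup₂_of_le ν hν eigenspace_le_maxGenEigenspace)
  calc f.maxGenEigenspace μ = (f.eigenspace μ ⊔ Y) ⊓ f.maxGenEigenspace μ := by
        rw [htop, top_inf_eq]
    _ = f.eigenspace μ ⊔ Y ⊓ f.maxGenEigenspace μ :=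
        sup_inf_assoc_of_le _ eigenspace_le_maxGenEigenspace
    _ = f.eigenspace μ := by rw [hdisj.symm.eq_bot, sup_bot_eq]

theorem exists_basis_forall_apply_eq_smul_of_commute [FiniteDimensional K V] (f : κ → End K V)
    (hcomm : Pairwise fun i j => Commute (f i) (f j))
    (hdiag : ∀ k, ⨆ μ, (f k).eigenspace μ = ⊤) :
    ∃ (b : Basis (Fin (finrank K V)) K V) (d : κ → Fin (finrank K V) → K),
      ∀ k l, f k (b l) = d k l • b l := by
  classical
  have hmax (k : κ) := maxGenEigenspace_eq_eigenspace_of_iSup_eigenspace_eq_top (hdiag k)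
  have hint : DirectSum.IsInternal fun χ : κ → K => ⨅ k, (f k).eigenspace (χ k) := by
    simp_rw [← hmax]
    refine DirectSum.isInternal_submodule_of_iSupIndep_of_iSup_eq_top ?_ ?_
    · refine independent_iInf_maxGenEigenspace_of_forall_mapsTo f fun i j φ =>
        mapsTo_maxGenEigenspace_of_comm ?_ φ
      rcases eq_or_ne i j with rfl | hij
      · rfl
      · exact hcomm hij.symm
    · refine iSup_iInf_maxGenEigenspace_eq_top_of_iSup_maxGenEigenspace_eq_top_of_commute f hcomm
        fun k => ?_
      simpa only [hmax] using hdiag k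
  let b₀ := hint.collectedBasis fun χ => Module.finBasis K _
  let e := b₀.indexEquiv (Module.finBasis K V)
  refine ⟨b₀.reindex e, fun k l => (e.symm l).1 k, fun k l => ?_⟩
  rw [Basis.reindex_apply, ← mem_eigenspace_iff]
  exact (Submodule.mem_iInf _).mp (hint.collectedBasis_mem _ (e.symm l)) k

end Module.End

namespace Matrix

variable {R ι : Type*} [CommRing R] [Fintype ι] [DecidableEq ι]

theorem toLin'_eq_toLin_iff_s9 (b : Basis ι R (ι → R)) (M A : Matrix ι ι R) :
    toLin' M = toLin b b A ↔
      M = (Pi.basisFun R ι).toMatrix b * A * ((Pi.basisFun R ι).toMatrix b)⁻¹ := by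
  rw [inv_eq_right_inv (Basis.toMatrix_mul_toMatrix_flip _ _), ← toLin'.injective.eq_iff]
  conv_rhs => rw [← LinearMap.toMatrix_toLin b b A,
    basis_toMatrix_mul_linearMap_toMatrix_mul_basis_toMatrix, LinearMap.toMatrix_eq_toMatrix',
    toLin'_toMatrix']

end Matrix

section

variable {ι κ : Type*} [Fintype ι] [DecidableEq ι]

theorem Diagonalizable.iSup_eigenspace_toLin'_eq_top {M : Matrix ι ι K} (h : Diagonalizable M) :
    ⨆ μ, eigenspace (toLin' M) μ = ⊤ := by
  obtain ⟨P, hP, d, hM⟩ := h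
  let b := (Pi.basisFun K ι).map (P.toLinearEquiv' hP.invertible)
  have hbP : (Pi.basisFun K ι).toMatrix b = P := by
    ext i j
    rw [Basis.toMatrix_apply, Pi.basisFun_repr, Basis.map_apply, Pi.basisFun_apply]
    show toLin' P (Pi.single j 1) i = P i j
    simp
  rw [← hbP, ← Matrix.toLin'_eq_toLin_iff_s9] at hM
  rw [hM]
  exact iSup_eigenspace_toLin_diagonal_eq_top d b

def SimultaneouslyDiagonalizable (Z : κ → Matrix ι ι K) : Prop :=
  ∃ P : Matrix ι ι K, IsUnit P ∧ ∃ d : κ → ι → K, ∀ k, Z k = P * diagonal (d k) * P⁻¹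

theorem simultaneouslyDiagonalizable_of_commute {Z : κ → Matrix ι ι K}
    (hcomm : ∀ i j, Commute (Z i) (Z j)) (hdiag : ∀ k, Diagonalizable (Z k)) :
    SimultaneouslyDiagonalizable Z := by
  obtain ⟨b, d, hb⟩ := exists_basis_forall_apply_eq_smul_of_commute (fun k => toLin' (Z k))
    (fun i j _ => (hcomm i j).map toLinAlgEquiv')
    fun k => (hdiag k).iSup_eigenspace_toLin'_eq_top
  let e := b.indexEquiv (Pi.basisFun K ι)
  let b' := b.reindex e
  have := (Pi.basisFun K ι).invertibleToMatrix b'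
  refine ⟨(Pi.basisFun K ι).toMatrix b', isUnit_of_invertible _, fun k l => d k (e.symm l),
    fun k => (Matrix.toLin'_eq_toLin_iff_s9 _ _ _).mp (b'.ext fun l => ?_)⟩
  rw [(hasEigenvector_toLin_diagonal _ l b').apply_eq_smul, Basis.reindex_apply]
  exact hb k (e.symm l)

end

theorem tensorRank_le_of_zSlice_eq_mul_diagonal_mul {α β : Type*} [Fintype α] [Fintype β]
    {p r : ℕ} (T : α → β → Fin p → K) (B : Matrix α (Fin r) K) (C : Matrix (Fin r) β K)
    (d : Fin p → Fin r → K) (hT : ∀ k, zSlice T k = B * diagonal (d k) * C) :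
    tensorRank T ≤ r :=
  Nat.sInf_le ⟨fun l i => B i l, fun l j => C l j, fun l k => d k l, fun i j k => by
    rw [show T i j k = zSlice T k i j from rfl, hT k, Matrix.mul_apply]
    simp only [mul_diagonal, mul_right_comm]⟩

theorem tensorRank_le_of_diagonalizable_commuting_extension_general
    {n p r : ℕ} (hnr : n ≤ r) (T : Fin n → Fin n → Fin p → K)
    (A : Matrix (Fin n) (Fin n) K)
    (hAinv : IsUnit A)
    (Z : Fin p → Matrix (Fin r) (Fin r) K)
    (hcomm : ∀ i j, Commute (Z i) (Z j))
    (hext : ∀ k, (Z k).submatrix (Fin.castLE hnr) (Fin.castLE hnr) = A⁻¹ * zSlice T k)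
    (hdiag : ∀ k, Diagonalizable (Z k)) :
    tensorRank T ≤ r := by
  obtain ⟨P, -, d, hZ⟩ := simultaneouslyDiagonalizable_of_commute hcomm hdiag
  set e := Fin.castLE hnr
  refine tensorRank_le_of_zSlice_eq_mul_diagonal_mul T (A * P.submatrix e id)
    (P⁻¹.submatrix id e) d fun k => ?_
  have hblock : A⁻¹ * zSlice T k = P.submatrix e id * diagonal (d k) * P⁻¹.submatrix id e := by
    rw [← hext, hZ, submatrix_mul _ _ _ id _ Function.bijective_id,
      submatrix_mul _ _ _ id _ Function.bijective_id, submatrix_id_id]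
  calc zSlice T k = A * (A⁻¹ * zSlice T k) :=
        (mul_nonsing_inv_cancel_left _ _ ((isUnit_iff_isUnit_det A).mp hAinv)).symm
    _ = _ := by rw [hblock]; simp only [Matrix.mul_assoc]

theorem tensorRank_le_of_diagonalizable_commuting_extension
    {n p r : ℕ} (hnr : n ≤ r) (T : Fin n → Fin n → Fin p → K)
    (A : Matrix (Fin n) (Fin n) K)
    (hA : A ∈ Submodule.span K (Set.range fun k => zSlice T k))
    (hAinv : IsUnit A)
    (Z : Fin p → Matrix (Fin r) (Fin r) K)
    (hcomm : ∀ i j, Commute (Z i) (Z j))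
    (hext : ∀ k, (Z k).submatrix (Fin.castLE hnr) (Fin.castLE hnr) = A⁻¹ * zSlice T k)
    (hdiag : ∀ k, Diagonalizable (Z k)) :
    tensorRank T ≤ r :=
  tensorRank_le_of_diagonalizable_commuting_extension_general hnr T A hAinv Z hcomm hext hdiag
end

section
/- Let T be a tensor of rank r and format n × n × p over an infinite field K, and suppose the span of the slices T_1, …, T_p contains an invertible matrix. Fix a rank-r decomposition T = Σ_{i=1}^r u_i ⊗ v_i ⊗ w_i, with U, V the r × n matrices of rows u_i, v_i, so that T_k = Uᵀ D_k V with D_k = diag(w_{1k}, …, w_{rk}). Then there exists an invertible A = Σ_k λ_k T_k in the span of the slices such that the diagonal matrix D = Σ_k λ_k D_k has rank r; and for any such A, the p-tuple (A^{-1}T_1, …, A^{-1}T_p) admits a commuting extension (Z_1, …, Z_p) of size r with all Z_i diagonalizable over K. -/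
/-!
Every combination `∑ λ_k T_k` factors as `Uᵀ D_λ V` with `D_λ = diag ⟨λ, w_i⟩`, so an
invertible one forces `n ≤ r`, and minimality of `r` forces every `w_i ≠ 0`; as `K` is infinite,
some `λ` avoids the zeros of the nonzero polynomial `det (∑ λ_k T_k) · ∏_i ⟨λ, w_i⟩`. For such `λ`,
`B = A⁻¹ Uᵀ D_λ` is a left inverse of `V`. Completing `B` by rows and `V` by columns (a basis of
`ker B`) to mutually inverse `r × r` matrices `P`, `Q`, the matrices `Z_k = P D_k D_λ⁻¹ Q` commute,
are diagonalizable, and have top-left block `B D_k D_λ⁻¹ V = A⁻¹ T_k`.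
-/

open Matrix BigOperators

variable {K : Type*} [Field K]

theorem Matrix.exists_fromRows_mul_fromCols_eq_one {ι κ : Type*} [Fintype ι] [Fintype κ]
    [DecidableEq ι] [DecidableEq κ] {B : Matrix ι κ K} {V : Matrix κ ι K} (hBV : B * V = 1) :
    ∃ (C : Matrix (Fin (Fintype.card κ - Fintype.card ι)) κ K)
      (W : Matrix κ (Fin (Fintype.card κ - Fintype.card ι)) K),
      fromRows B C * fromCols V W = 1 := by
  have hsurj : Function.Surjective (toLin' B) := fun y =>
    ⟨V *ᵥ y, by rw [toLin'_apply, mulVec_mulVec, hBV, one_mulVec]⟩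
  have hdim : Module.finrank K (toLin' B).ker = Fintype.card κ - Fintype.card ι := by
    have := LinearMap.finrank_range_add_finrank_ker (toLin' B)
    rw [LinearMap.range_eq_top.mpr hsurj, finrank_top, Module.finrank_pi,
      Module.finrank_pi] at this
    omega
  let b := Module.finBasisOfFinrankEq K _ hdim
  have hBP : B * (1 - V * B) = 0 := by
    rw [Matrix.mul_sub, ← Matrix.mul_assoc, hBV, Matrix.mul_one, Matrix.one_mul, sub_self]
  -- `1 - V * B` projects `κ → K` onto the kernel of `B` along the range of `V`
  let π : (κ → K) →ₗ[K] (toLin' B).ker := LinearMap.codRestrict _ (toLin' (1 - V * B)) fun x => by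
    rw [LinearMap.mem_ker, ← toLin'_mul_apply, hBP, map_zero, LinearMap.zero_apply]
  have hπV (x : ι → K) : π (V *ᵥ x) = 0 := Subtype.ext <| by simp [π, hBV]
  have hπN (x : (toLin' B).ker) : π x = x := Subtype.ext <| by simp [π]
  refine ⟨LinearMap.toMatrix' (b.equivFun.toLinearMap ∘ₗ π),
    LinearMap.toMatrix' ((toLin' B).ker.subtype ∘ₗ b.equivFun.symm.toLinearMap), ?_⟩
  rw [fromRows_mul_fromCols, ← fromBlocks_one, hBV]
  congr 1 <;> apply toLin'.injective <;>
    simp only [Matrix.toLin'_mul, toLin'_toMatrix', map_zero, toLin'_one]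
  · rw [← LinearMap.comp_assoc, LinearMap.comp_ker_subtype, LinearMap.zero_comp]
  · exact LinearMap.ext fun x => by simp [hπV]
  · exact LinearMap.ext fun x => by
      simp only [LinearMap.comp_apply, LinearEquiv.coe_coe, Submodule.subtype_apply, hπN,
        LinearEquiv.apply_symm_apply, LinearMap.id_apply]

theorem Matrix.exists_mul_eq_one_submatrix_castLE_eq {n r : ℕ} (hnr : n ≤ r)
    {B : Matrix (Fin n) (Fin r) K} {V : Matrix (Fin r) (Fin n) K} (hBV : B * V = 1) :
    ∃ P Q : Matrix (Fin r) (Fin r) K, P * Q = 1 ∧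
      P.submatrix (Fin.castLE hnr) id = B ∧ Q.submatrix id (Fin.castLE hnr) = V := by
  obtain ⟨C, W, hCW⟩ := exists_fromRows_mul_fromCols_eq_one hBV
  let e : Fin n ⊕ Fin (Fintype.card (Fin r) - Fintype.card (Fin n)) ≃ Fin r :=
    finSumFinEquiv.trans (finCongr (by simp only [Fintype.card_fin]; omega))
  have he (i : Fin n) : e.symm (Fin.castLE hnr i) = Sum.inl i := by
    rw [Equiv.symm_apply_eq]; ext; simp [e]
  refine ⟨(fromRows B C).submatrix e.symm id, (fromCols V W).submatrix id e.symm, ?_, ?_, ?_⟩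
  · simpa only [hCW, submatrix_one_equiv, Equiv.coe_refl] using
      submatrix_mul_equiv (fromRows B C) (fromCols V W) e.symm (Equiv.refl _) e.symm
  · ext i j; simp [he]
  · ext i j; simp [he]

theorem exists_commuting_diagonalizable_extension_of_mul_eq_one {ι : Type*} {n r : ℕ}
    (hnr : n ≤ r) {B : Matrix (Fin n) (Fin r) K} {V : Matrix (Fin r) (Fin n) K}
    (hBV : B * V = 1) (c : ι → Fin r → K) :
    ∃ Z : ι → Matrix (Fin r) (Fin r) K,
      (∀ i j, Commute (Z i) (Z j)) ∧
      (∀ k, (Z k).submatrix (Fin.castLE hnr) (Fin.castLE hnr) = B * diagonal (c k) * V) ∧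
      ∀ k, Diagonalizable (Z k) := by
  obtain ⟨P, Q, hPQ, hP, hQ⟩ := exists_mul_eq_one_submatrix_castLE_eq hnr hBV
  have hQP : Q * P = 1 := mul_eq_one_comm.mp hPQ
  have hconj (d d' : Fin r → K) :
      P * diagonal d * Q * (P * diagonal d' * Q) = P * diagonal (d * d') * Q := by
    simp only [Matrix.mul_assoc]
    rw [← Matrix.mul_assoc Q, hQP, Matrix.one_mul, ← Matrix.mul_assoc (diagonal d),
      diagonal_mul_diagonal]
    rfl
  refine ⟨fun k => P * diagonal (c k) * Q, fun i j => ?_, fun k => ?_, fun k => ?_⟩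
  · rw [Commute, SemiconjBy, hconj, hconj, mul_comm (c i)]
  · rw [← submatrix_mul_equiv _ _ _ (Equiv.refl _), ← submatrix_mul_equiv _ _ _ (Equiv.refl _)]
    simp [hP, hQ]
  · exact ⟨P, .of_mul_eq_one Q hPQ, c k, by rw [inv_eq_right_inv hPQ]⟩

theorem exists_commuting_diagonalizable_extension_inv_mul {ι : Type*} {n r : ℕ} (hnr : n ≤ r)
    {A : Matrix (Fin n) (Fin n) K} (hA : IsUnit A) {U : Matrix (Fin n) (Fin r) K}
    {V : Matrix (Fin r) (Fin n) K} {d : Fin r → K} (hd : ∀ i, d i ≠ 0)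
    (hAUV : A = U * diagonal d * V) (c : ι → Fin r → K) :
    ∃ Z : ι → Matrix (Fin r) (Fin r) K,
      (∀ i j, Commute (Z i) (Z j)) ∧
      (∀ k, (Z k).submatrix (Fin.castLE hnr) (Fin.castLE hnr) =
        A⁻¹ * (U * diagonal (c k) * V)) ∧
      ∀ k, Diagonalizable (Z k) := by
  have hBV : A⁻¹ * U * diagonal d * V = 1 := by
    rw [Matrix.mul_assoc, Matrix.mul_assoc, ← Matrix.mul_assoc U, ← hAUV,
      nonsing_inv_mul A ((isUnit_iff_isUnit_det A).mp hA)]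
  obtain ⟨Z, hcomm, hblock, hdiag⟩ :=
    exists_commuting_diagonalizable_extension_of_mul_eq_one hnr hBV fun k => c k / d
  refine ⟨Z, hcomm, fun k => ?_, hdiag⟩
  rw [hblock, Matrix.mul_assoc (A⁻¹ * U), diagonal_mul_diagonal]
  simp only [Matrix.mul_assoc]
  congr 4
  ext i
  rw [Pi.div_apply, mul_div_cancel₀ _ (hd i)]

theorem MvPolynomial.exists_eval_ne_zero {σ : Type*} [Infinite K] {f : MvPolynomial σ K}
    (hf : f ≠ 0) : ∃ x, eval x f ≠ 0 := by
  by_contra! h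
  exact hf (funext fun x => by rw [h x, map_zero])

theorem MvPolynomial.sum_C_mul_X_ne_zero {σ : Type*} [Fintype σ] {a : σ → K} (ha : a ≠ 0) :
    ∑ k, C (a k) * X k ≠ 0 := by
  classical
  obtain ⟨k, hk⟩ := Function.ne_iff.mp ha
  intro h
  exact hk (by simpa [Pi.single_apply] using congrArg (eval (Pi.single k 1)) h)

open MvPolynomial in
theorem exists_isUnit_sum_smul_and_sum_mul_ne_zero [Infinite K] {ι σ α : Type*} [Fintype ι]
    [Fintype σ] [Fintype α] [DecidableEq α] {S : σ → Matrix α α K}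
    (hS : ∃ A ∈ Submodule.span K (Set.range S), IsUnit A) {w : ι → σ → K} (hw : ∀ i, w i ≠ 0) :
    ∃ lam : σ → K, IsUnit (∑ k, lam k • S k) ∧ ∀ i, ∑ k, lam k * w i k ≠ 0 := by
  let pencil : Matrix α α (MvPolynomial σ K) := ∑ k, (X k : MvPolynomial σ K) • (S k).map C
  have heval (lam : σ → K) : (pencil.map (eval lam)) = ∑ k, lam k • S k := by
    ext i j; simp [pencil, Matrix.sum_apply]
  obtain ⟨A, hAspan, hA⟩ := hS
  obtain ⟨c, rfl⟩ := (Submodule.mem_span_range_iff_exists_fun K).mp hAspan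
  have hdet : pencil.det ≠ 0 := fun h => by
    rw [isUnit_iff_isUnit_det, ← heval, ← RingHom.mapMatrix_apply, ← RingHom.map_det, h,
      map_zero] at hA
    exact not_isUnit_zero hA
  obtain ⟨lam, hlam⟩ := exists_eval_ne_zero (mul_ne_zero hdet
    (Finset.prod_ne_zero_iff.mpr fun i _ => sum_C_mul_X_ne_zero (hw i)))
  rw [map_mul, map_prod, mul_ne_zero_iff, Finset.prod_ne_zero_iff] at hlam
  refine ⟨lam, ?_, fun i => ?_⟩
  · rw [isUnit_iff_isUnit_det, ← heval, ← RingHom.mapMatrix_apply, ← RingHom.map_det]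
    exact hlam.1.isUnit
  · simpa [mul_comm] using hlam.2 i (Finset.mem_univ i)

section Decomposition

variable {α β : Type*} [Fintype α] [Fintype β] {p r : ℕ} {T : α → β → Fin p → K}
  {u : Fin r → α → K} {v : Fin r → β → K} {w : Fin r → Fin p → K}

theorem sum_smul_zSlice_eq (hT : tensorDecomp T r u v w) (c : Fin p → K) :
    ∑ k, c k • zSlice T k = (of u)ᵀ * diagonal (fun l => ∑ k, c k * w l k) * of v := by
  ext i j
  simp only [Matrix.sum_apply, Matrix.smul_apply, zSlice, of_apply, smul_eq_mul, mul_apply,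
    diagonal_apply, transpose_apply, hT i j, mul_ite, mul_zero, Finset.sum_ite_eq',
    Finset.mem_univ, if_true, Finset.mul_sum, Finset.sum_mul]
  rw [Finset.sum_comm]
  exact Finset.sum_congr rfl fun l _ => Finset.sum_congr rfl fun k _ => by ring

theorem zSlice_eq (hT : tensorDecomp T r u v w) (k : Fin p) :
    zSlice T k = (of u)ᵀ * diagonal (fun l => w l k) * of v := by
  simpa [Pi.single_apply] using sum_smul_zSlice_eq hT (Pi.single k 1)

theorem rank_le_of_mem_span_zSlice (hT : tensorDecomp T r u v w) {A : Matrix α β K}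
    (hA : A ∈ Submodule.span K (Set.range (zSlice T))) : A.rank ≤ r := by
  obtain ⟨c, rfl⟩ := (Submodule.mem_span_range_iff_exists_fun K).mp hA
  rw [sum_smul_zSlice_eq hT c]
  calc _ ≤ ((of u)ᵀ * diagonal fun l => ∑ k, c k * w l k).rank := rank_mul_le_left _ _
    _ ≤ (of u)ᵀ.rank := rank_mul_le_left _ _
    _ ≤ r := by simpa using (of u)ᵀ.rank_le_card_width

end Decomposition

theorem ne_zero_of_tensorDecomp_of_tensorRank_eq {α β γ : Type*} [Fintype α] [Fintype β]
    [Fintype γ] {T : α → β → γ → K} {r : ℕ} {u : Fin r → α → K} {v : Fin r → β → K}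
    {w : Fin r → γ → K} (hrank : tensorRank T = r) (hT : tensorDecomp T r u v w) (i : Fin r) :
    w i ≠ 0 := by
  intro hwi
  obtain ⟨m, rfl⟩ : ∃ m, r = m + 1 := Nat.exists_eq_add_one_of_ne_zero i.pos.ne'
  have hdrop : tensorDecomp T m (u ∘ i.succAbove) (v ∘ i.succAbove) (w ∘ i.succAbove) := by
    intro a b k
    rw [hT a b k, Fin.sum_univ_succAbove _ i]
    simp [hwi]
  have : tensorRank T ≤ m := Nat.sInf_le ⟨_, _, _, hdrop⟩
  omega

theorem exists_diagonalizable_commuting_extension_of_rank_decomposition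
    {n p r : ℕ} [Infinite K] (T : Fin n → Fin n → Fin p → K)
    (hrank : tensorRank T = r)
    (hinv : ∃ A ∈ Submodule.span K (Set.range fun k => zSlice T k), IsUnit A)
    (u : Fin r → Fin n → K) (v : Fin r → Fin n → K) (w : Fin r → Fin p → K)
    (hT : tensorDecomp T r u v w) :
    ∃ hnr : n ≤ r,
      (∃ lam : Fin p → K,
          IsUnit (∑ k, lam k • zSlice T k) ∧ ∀ i, (∑ k, lam k * w i k) ≠ 0) ∧
      ∀ lam : Fin p → K, IsUnit (∑ k, lam k • zSlice T k) →
        (∀ i, (∑ k, lam k * w i k) ≠ 0) →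
        ∃ Z : Fin p → Matrix (Fin r) (Fin r) K,
          (∀ i j, Commute (Z i) (Z j)) ∧
          (∀ k, (Z k).submatrix (Fin.castLE hnr) (Fin.castLE hnr) =
            (∑ l, lam l • zSlice T l)⁻¹ * zSlice T k) ∧
          ∀ k, Diagonalizable (Z k) := by
  obtain ⟨A, hAspan, hA⟩ := hinv
  have hnr : n ≤ r := by
    simpa [rank_of_isUnit A hA] using rank_le_of_mem_span_zSlice hT hAspan
  refine ⟨hnr, exists_isUnit_sum_smul_and_sum_mul_ne_zero ⟨A, hAspan, hA⟩
    (ne_zero_of_tensorDecomp_of_tensorRank_eq hrank hT), fun lam hlam hd => ?_⟩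
  obtain ⟨Z, hcomm, hblock, hdiag⟩ := exists_commuting_diagonalizable_extension_inv_mul hnr hlam
    hd (sum_smul_zSlice_eq hT lam) fun k l => w l k
  exact ⟨Z, hcomm, fun k => by rw [hblock, zSlice_eq hT], hdiag⟩
end

section
/- Let T be a tensor of format n × n × 3 over a field K with slices T_1, T_2, T_3, and suppose T_1 is invertible. Then rank(T) ≥ n + (1/2)·rank(T_2 T_1^{-1} T_3 − T_3 T_1^{-1} T_2). -/
open Matrix BigOperators

variable {K : Type*} [Field K]

/-!
Write a decomposition of length `r` slice-wise as `Tₖ = U Dₖ V` with `U : n × r`, `V : r × n` and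
diagonal `Dₖ`. If `D₁ = 1` then `E = 1 - V T₁⁻¹ U` satisfies `U E = 0`, so `rank E ≤ r - n`, and
since diagonal matrices commute,
`T₂ T₁⁻¹ T₃ - T₃ T₁⁻¹ T₂ = U (D₃ E D₂ - D₂ E D₃) V` has rank at most `2 (r - n)`.
In general the terms with vanishing `T₁`-weight contribute a perturbation of rank at most twice
their number, and the remaining terms are rescaled to have `T₁`-weight `1`.
-/

theorem Matrix.rank_add_le {m n : Type*} [Fintype n] (A B : Matrix m n K) :
    (A + B).rank ≤ A.rank + B.rank := by
  have hrange : LinearMap.range (A + B).mulVecLin ≤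
      LinearMap.range A.mulVecLin ⊔ LinearMap.range B.mulVecLin := by
    rintro _ ⟨x, rfl⟩
    rw [Matrix.mulVecLin_add]
    exact Submodule.add_mem_sup (LinearMap.mem_range_self _ x) (LinearMap.mem_range_self _ x)
  exact (Submodule.finrank_mono hrange).trans (Submodule.finrank_add_le_finrank_add_finrank _ _)

section SliceCommutator

variable {m ι : Type*} [Fintype m] [DecidableEq m] [Fintype ι]

/-- `V (U V)⁻¹ U` is an idempotent of rank `card m`, so `E = 1 - V (U V)⁻¹ U` has rank at most
`card ι - card m`, and the commutator factors through `E` twice. -/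
theorem rank_commutator_of_factorization_add_le (U : Matrix m ι K) (V : Matrix ι m K)
    (hUV : IsUnit (U * V)) {D₁ D₂ : Matrix ι ι K} (hD : Commute D₁ D₂) :
    (U * D₁ * V * (U * V)⁻¹ * (U * D₂ * V) - U * D₂ * V * (U * V)⁻¹ * (U * D₁ * V)).rank
      + 2 * Fintype.card m ≤ 2 * Fintype.card ι := by
  classical
  set E : Matrix ι ι K := 1 - V * (U * V)⁻¹ * U
  have hUE : U * E = 0 := by
    simp only [E, Matrix.mul_sub, Matrix.mul_one, ← Matrix.mul_assoc,
      Matrix.mul_nonsing_inv _ ((Matrix.isUnit_iff_isUnit_det _).mp hUV), Matrix.one_mul,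
      sub_self]
  have hE : E.rank + Fintype.card m ≤ Fintype.card ι := by
    have hU : Fintype.card m ≤ U.rank :=
      (Matrix.rank_of_isUnit _ hUV).symm.trans_le (Matrix.rank_mul_le_left _ _)
    have := Matrix.rank_add_rank_le_card_of_mul_eq_zero hUE
    omega
  have hVU : V * (U * V)⁻¹ * U = 1 - E := (sub_sub_cancel _ _).symm
  have hcomm : U * D₁ * V * (U * V)⁻¹ * (U * D₂ * V) - U * D₂ * V * (U * V)⁻¹ * (U * D₁ * V)
      = U * (D₂ * E * D₁ + (-D₁) * E * D₂) * V := by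
    calc _ = U * D₁ * (V * (U * V)⁻¹ * U) * D₂ * V - U * D₂ * (V * (U * V)⁻¹ * U) * D₁ * V := by
          simp only [Matrix.mul_assoc]
      _ = _ := by
          rw [hVU]
          simp only [Matrix.mul_sub, Matrix.sub_mul, Matrix.mul_add, Matrix.add_mul,
            Matrix.neg_mul, Matrix.mul_neg, Matrix.mul_one, Matrix.mul_assoc, hD.eq]
          abel
  have hfactor (A B : Matrix ι ι K) : (A * E * B).rank ≤ E.rank :=
    (Matrix.rank_mul_le_left _ _).trans (Matrix.rank_mul_le_right _ _)
  have hrank : (U * (D₂ * E * D₁ + (-D₁) * E * D₂) * V).rank ≤ 2 * E.rank :=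
    calc _ ≤ (D₂ * E * D₁ + (-D₁) * E * D₂).rank :=
          (Matrix.rank_mul_le_left _ _).trans (Matrix.rank_mul_le_right _ _)
      _ ≤ (D₂ * E * D₁).rank + ((-D₁) * E * D₂).rank := Matrix.rank_add_le _ _
      _ ≤ 2 * E.rank := by linarith [hfactor D₂ D₁, hfactor (-D₁) D₂]
  rw [hcomm]
  omega

end SliceCommutator

section Perturbation

variable {m n β : Type*} [Fintype n] [Fintype m] [Fintype β]

theorem rank_commutator_add_lowRank_le (G : Matrix n m K) (A₁ A₂ : Matrix m n K)
    (P : Matrix m β K) (C₁ C₂ : Matrix β β K) (Q : Matrix β n K) :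
    ((A₁ + P * C₁ * Q) * G * (A₂ + P * C₂ * Q) - (A₂ + P * C₂ * Q) * G * (A₁ + P * C₁ * Q)).rank
      ≤ (A₁ * G * A₂ - A₂ * G * A₁).rank + 2 * Fintype.card β := by
  set S₁ := A₁ + P * C₁ * Q
  set S₂ := A₂ + P * C₂ * Q
  have hsplit : S₁ * G * S₂ - S₂ * G * S₁ = (A₁ * G * A₂ - A₂ * G * A₁)
      + (A₁ * G * P * C₂ - A₂ * G * P * C₁) * Q + P * (C₁ * Q * G * S₂ - C₂ * Q * G * S₁) := by
    simp only [S₁, S₂, Matrix.mul_add, Matrix.add_mul, Matrix.mul_sub, Matrix.sub_mul,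
      Matrix.mul_assoc]
    abel
  rw [hsplit]
  calc _ ≤ (A₁ * G * A₂ - A₂ * G * A₁ + (A₁ * G * P * C₂ - A₂ * G * P * C₁) * Q).rank
          + (P * (C₁ * Q * G * S₂ - C₂ * Q * G * S₁)).rank := Matrix.rank_add_le _ _
    _ ≤ (A₁ * G * A₂ - A₂ * G * A₁).rank + ((A₁ * G * P * C₂ - A₂ * G * P * C₁) * Q).rank
          + (P * (C₁ * Q * G * S₂ - C₂ * Q * G * S₁)).rank := by
          gcongr
          exact Matrix.rank_add_le _ _
    _ ≤ (A₁ * G * A₂ - A₂ * G * A₁).rank + Fintype.card β + Fintype.card β := by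
          gcongr
          · exact (Matrix.rank_mul_le_right _ _).trans (Matrix.rank_le_card_height Q)
          · exact (Matrix.rank_mul_le_left _ _).trans (Matrix.rank_le_card_width P)
    _ = _ := by ring

end Perturbation

section DiagonalFactorization

variable {m n ι : Type*} [Fintype ι] [DecidableEq ι]

theorem mul_diagonal_mul_eq_add_subtype (p : ι → Prop) [DecidablePred p] (U : Matrix m ι K)
    (d : ι → K) (V : Matrix ι n K) :
    U * diagonal d * V =
      (U.submatrix id (↑) : Matrix m {l // p l} K) * diagonal (fun l : {l // p l} ↦ d l)
          * (V.submatrix (↑) id : Matrix {l // p l} n K)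
        + (U.submatrix id (↑) : Matrix m {l // ¬p l} K) * diagonal (fun l : {l // ¬p l} ↦ d l)
          * (V.submatrix (↑) id : Matrix {l // ¬p l} n K) := by
  ext i j
  simp only [Matrix.add_apply, Matrix.mul_apply, diagonal_apply, mul_ite, mul_zero,
    Finset.sum_ite_eq', Finset.mem_univ, if_true, Matrix.submatrix_apply, id]
  exact (Fintype.sum_subtype_add_sum_subtype p fun l ↦ U i l * d l * V l j).symm

theorem mul_diagonal_mul_eq_mul_diagonal_div_mul (U : Matrix m ι K) {d₀ : ι → K}
    (hd₀ : ∀ l, d₀ l ≠ 0) (d : ι → K) (V : Matrix ι n K) :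
    U * diagonal d * V = U * diagonal (d / d₀) * (diagonal d₀ * V) := by
  rw [← Matrix.mul_assoc, Matrix.mul_assoc U (diagonal (d / d₀)), diagonal_mul_diagonal]
  congr
  ext l
  exact (div_mul_cancel₀ _ (hd₀ l)).symm

variable [Fintype m] [DecidableEq m]

theorem rank_commutator_of_diagonal_factorization_add_le (U : Matrix m ι K) (V : Matrix ι m K)
    (d₀ d₁ d₂ : ι → K) (hS₀ : IsUnit (U * diagonal d₀ * V)) :
    (U * diagonal d₁ * V * (U * diagonal d₀ * V)⁻¹ * (U * diagonal d₂ * V)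
        - U * diagonal d₂ * V * (U * diagonal d₀ * V)⁻¹ * (U * diagonal d₁ * V)).rank
      + 2 * Fintype.card m ≤ 2 * Fintype.card ι := by
  classical
  -- Terms with `d₀ l = 0` are split off as a perturbation of rank at most their number;
  -- the others are rescaled so that the invertible slice factors as `Ug * Vg`.
  set Ug : Matrix m {l // d₀ l ≠ 0} K := U.submatrix id (↑)
  set Vg : Matrix {l // d₀ l ≠ 0} m K :=
    diagonal (fun l : {l // d₀ l ≠ 0} ↦ d₀ l) * V.submatrix (↑) id
  set Ub : Matrix m {l // ¬d₀ l ≠ 0} K := U.submatrix id (↑)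
  set Vb : Matrix {l // ¬d₀ l ≠ 0} m K := V.submatrix (↑) id
  have hsplit (d : ι → K) : U * diagonal d * V =
      Ug * diagonal (fun l : {l // d₀ l ≠ 0} ↦ d l / d₀ l) * Vg
        + Ub * diagonal (fun l : {l // ¬d₀ l ≠ 0} ↦ d l) * Vb := by
    rw [mul_diagonal_mul_eq_add_subtype (d₀ · ≠ 0),
      mul_diagonal_mul_eq_mul_diagonal_div_mul _ (fun l ↦ l.2)]
    rfl
  have hS₀_eq : U * diagonal d₀ * V = Ug * Vg := by
    have hd₀ : diagonal (fun l : {l // ¬d₀ l ≠ 0} ↦ d₀ l) = 0 :=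
      diagonal_eq_zero.mpr (funext fun l ↦ not_not.mp l.2)
    rw [mul_diagonal_mul_eq_add_subtype (d₀ · ≠ 0), hd₀, Matrix.mul_zero, Matrix.zero_mul,
      add_zero, Matrix.mul_assoc]
    rfl
  have hgood := rank_commutator_of_factorization_add_le Ug Vg (hS₀_eq ▸ hS₀)
    (commute_diagonal (fun l : {l // d₀ l ≠ 0} ↦ d₁ l / d₀ l) (fun l ↦ d₂ l / d₀ l))
  have hcard := Fintype.card_subtype_compl (fun l ↦ d₀ l ≠ 0)
  have := Fintype.card_subtype_le (fun l ↦ d₀ l ≠ 0)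
  rw [hsplit d₁, hsplit d₂, hS₀_eq]
  refine (Nat.add_le_add_right (rank_commutator_add_lowRank_le _ _ _ _ _ _ _) _).trans ?_
  omega

end DiagonalFactorization

section TensorDecomposition

variable {α β γ : Type*} [Fintype α] [Fintype β] [Fintype γ]

theorem exists_tensorDecomp (T : α → β → γ → K) : ∃ r u v w, tensorDecomp T r u v w := by
  classical
  let e := (Fintype.equivFin (α × β)).symm
  refine ⟨Fintype.card (α × β), fun l i ↦ if i = (e l).1 then 1 else 0,
    fun l j ↦ if j = (e l).2 then 1 else 0, fun l k ↦ T (e l).1 (e l).2 k, fun i j k ↦ ?_⟩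
  rw [e.sum_comp (fun x ↦ (if i = x.1 then 1 else 0) * (if j = x.2 then 1 else 0) * T x.1 x.2 k)]
  simp [Fintype.sum_prod_type]

theorem exists_tensorDecomp_tensorRank (T : α → β → γ → K) :
    ∃ u v w, tensorDecomp T (tensorRank T) u v w :=
  Nat.sInf_mem (exists_tensorDecomp T)

theorem zSlice_eq_of_tensorDecomp {p r : ℕ} {T : α → β → Fin p → K} {u : Fin r → α → K}
    {v : Fin r → β → K} {w : Fin r → Fin p → K} (h : tensorDecomp T r u v w) (k : Fin p) :
    zSlice T k = of (fun i l ↦ u l i) * diagonal (fun l ↦ w l k) * of (fun l j ↦ v l j) := by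
  ext i j
  rw [Matrix.mul_apply]
  simp only [zSlice, of_apply, h i j k, Matrix.mul_diagonal]
  exact Finset.sum_congr rfl fun l _ ↦ by ring

end TensorDecomposition

theorem strassen_lower_bound
    {n : ℕ} (T : Fin n → Fin n → Fin 3 → K)
    (hinv : IsUnit (zSlice T 0)) :
    (n : ℚ) + (1 / 2) *
      ((zSlice T 1 * (zSlice T 0)⁻¹ * zSlice T 2 -
        zSlice T 2 * (zSlice T 0)⁻¹ * zSlice T 1).rank : ℚ)
      ≤ (tensorRank T : ℚ) := by
  obtain ⟨u, v, w, hT⟩ := exists_tensorDecomp_tensorRank T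
  have hslice := zSlice_eq_of_tensorDecomp hT
  have hbound := rank_commutator_of_diagonal_factorization_add_le _ _ _
    (fun l ↦ w l 1) (fun l ↦ w l 2) (hslice 0 ▸ hinv)
  rw [← hslice 0, ← hslice 1, ← hslice 2, Fintype.card_fin, Fintype.card_fin] at hbound
  have hbound_ℚ := (Nat.cast_le (α := ℚ)).mpr hbound
  push_cast at hbound_ℚ
  linarith
end

section
/- Let T be a tensor of format n × n × p over a field K of rank r, let λ ∈ K^p with λ_1 ≠ 0, and let T' be obtained from T by replacing the first slice with Σ_k λ_k T_k. If the decomposition of T' as a sum of r rank-one tensors is essentially unique (unique up to permutation of the rank-one summands and rescaling within each summand), then the decomposition of T as a sum of r rank-one tensors is also essentially unique. -/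
open Matrix BigOperators

variable {K : Type*} [Field K]

/-- A rank-`r` decomposition is essentially unique: any two decompositions agree up to
permutation of the rank-one summands. -/
def EssentiallyUnique {α β γ : Type*} [Fintype α] [Fintype β] [Fintype γ]
    (T : α → β → γ → K) (r : ℕ) : Prop :=
  ∀ u v w u' v' w', tensorDecomp T r u v w → tensorDecomp T r u' v' w' →
    ∃ σ : Equiv.Perm (Fin r), ∀ (i : Fin r) (a : α) (b : β) (c : γ),
      u (σ i) a * v (σ i) b * w (σ i) c = u' i a * v' i b * w' i c

/-! The new tensor `T'` is `T` with the invertible matrix `M` (the identity with its first row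
replaced by `λ`, so `det M = λ₁`) applied along the third mode. Applying `M` to the third
factors turns a decomposition of `T` into one of `T'`, and since `M` is injective the rank-one
summands of `T` are recovered from those of `T'`. -/

section ModeThree

variable {α β γ δ : Type*} [Fintype α] [Fintype β] [Fintype γ] [Fintype δ]

theorem tensorDecomp.map_modeThree {T : α → β → γ → K} {r : ℕ}
    {u : Fin r → α → K} {v : Fin r → β → K} {w : Fin r → γ → K}
    (hT : tensorDecomp T r u v w) (A : (γ → K) →ₗ[K] (δ → K)) :
    tensorDecomp (fun a b => A (T a b)) r u v (fun l => A (w l)) := by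
  have hfiber : ∀ a b, T a b = ∑ l, (u l a * v l b) • w l := fun a b => by
    ext c; simp [hT a b c]
  intro a b c
  simp [hfiber, map_sum, map_smul, Finset.sum_apply]

theorem EssentiallyUnique.of_map_modeThree {T : α → β → γ → K} {r : ℕ}
    {A : (γ → K) →ₗ[K] (δ → K)} (hA : Function.Injective A)
    (h : EssentiallyUnique (fun a b => A (T a b)) r) : EssentiallyUnique T r := by
  intro u v w u' v' w' hd hd'
  obtain ⟨σ, hσ⟩ := h u v _ u' v' _ (hd.map_modeThree A) (hd'.map_modeThree A)
  refine ⟨σ, fun i a b c => ?_⟩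
  have hfiber : (u (σ i) a * v (σ i) b) • w (σ i) = (u' i a * v' i b) • w' i :=
    hA <| by ext c; simpa [mul_assoc] using hσ i a b c
  simpa [mul_assoc] using congrFun hfiber c

end ModeThree

theorem det_one_updateRow {γ : Type*} [Fintype γ] [DecidableEq γ] (k₀ : γ) (lam : γ → K) :
    ((1 : Matrix γ γ K).updateRow k₀ lam).det = lam k₀ := by
  have hlam : ∑ k, lam k • (1 : Matrix γ γ K) k = lam := by
    ext j; simp [Matrix.one_apply]
  simpa [hlam] using det_updateRow_sum (1 : Matrix γ γ K) k₀ lam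

theorem essentially_unique_of_replaced_first_slice_general
    {n p r : ℕ} (T : Fin n → Fin n → Fin (p + 1) → K)
    (lam : Fin (p + 1) → K) (hlam : lam 0 ≠ 0)
    (T' : Fin n → Fin n → Fin (p + 1) → K)
    (h0 : ∀ i j, T' i j 0 = ∑ k, lam k * T i j k)
    (hrest : ∀ i j k, k ≠ 0 → T' i j k = T i j k)
    (hT' : EssentiallyUnique T' r) :
    EssentiallyUnique T r := by
  set M := (1 : Matrix (Fin (p + 1)) (Fin (p + 1)) K).updateRow 0 lam
  have hT'M : T' = fun i j => M.mulVecLin (T i j) := by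
    ext i j k
    rcases eq_or_ne k 0 with rfl | hk
    · simp [M, updateRow_mulVec, h0, dotProduct]
    · simp [M, updateRow_mulVec, hk, hrest i j k hk]
  have hM : Function.Injective M.mulVecLin :=
    mulVec_injective_of_det_ne_zero (by rwa [det_one_updateRow])
  subst hT'M
  exact hT'.of_map_modeThree hM

theorem essentially_unique_of_replaced_first_slice
    {n p r : ℕ} (T : Fin n → Fin n → Fin (p + 1) → K)
    (hrank : tensorRank T = r)
    (lam : Fin (p + 1) → K) (hlam : lam 0 ≠ 0)
    (T' : Fin n → Fin n → Fin (p + 1) → K)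
    (h0 : ∀ i j, T' i j 0 = ∑ k, lam k * T i j k)
    (hrest : ∀ i j k, k ≠ 0 → T' i j k = T i j k)
    (hT' : EssentiallyUnique T' r) :
    EssentiallyUnique T r :=
  essentially_unique_of_replaced_first_slice_general T lam hlam T' h0 hrest hT'
end
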